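/- arXiv:1708.04065 — 3 statements merged into one kernel-verified Lean document; each statement's English description precedes it below -/
import Mathlib

section
/- Let A = ℤ⟨X,Y⟩ and p = 2. Then the element ⟨X⟩·⟨Y⟩ = (XY, X²Y², X⁴Y⁴, ...) of X(A) does not lie in the topological closure of the additive subgroup of A^{ℕ₀} generated by the set { V^n(⟨a⟩) : n ∈ ℕ₀, a ∈ A } together with [X(A),X(A)]. In particular, HH₀(X(A)) := X(A)/closure([X(A),X(A)]) is not topologically generated by the elements V^n(⟨a⟩). -/
/-- Verschiebung operator: `V(a₀,a₁,...) = p·(0,a₀,a₁,...)`. -/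
def Vb (p : ℕ) {A : Type*} [Ring A] (a : ℕ → A) : ℕ → A
  | 0 => 0
  | n + 1 => (p : A) * a n

/-- Teichmüller element: `⟨a⟩ = (a, a^p, a^{p²}, ...)`. -/
def tm (p : ℕ) {A : Type*} [Ring A] (a : A) : ℕ → A := fun n => a ^ p ^ n

/-- Generators of `X(A)`: all `V^m(⟨a₁⟩⋯⟨a_r⟩)` with `m ∈ ℕ₀`, `r ≥ 1`, `aᵢ ∈ A`. -/
def XAgen (p : ℕ) (A : Type*) [Ring A] : Set (ℕ → A) :=
  {x | ∃ (m : ℕ) (l : List A), l ≠ [] ∧ x = (Vb p)^[m] ((l.map (tm p)).prod)}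

/-- `X(A)`: the topological closure of the additive subgroup generated by `XAgen`. -/
noncomputable def XA (p : ℕ) (A : Type*) [Ring A] [TopologicalSpace A] [DiscreteTopology A] :
    AddSubgroup (ℕ → A) :=
  (AddSubgroup.closure (XAgen p A)).topologicalClosure

/-- The set of commutators `xy − yx` with `x, y ∈ X(A)`. -/
def commXA (p : ℕ) (A : Type*) [Ring A] [TopologicalSpace A] [DiscreteTopology A] :
    Set (ℕ → A) :=
  {z | ∃ x ∈ XA p A, ∃ y ∈ XA p A, z = x * y - y * x}

/-- Words in the two letters `X, Y`. -/
abbrev FW := FreeMonoid (Fin 2)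

/-- `A = ℤ⟨X,Y⟩`. -/
abbrev A2 := MonoidAlgebra ℤ FW

instance : TopologicalSpace A2 := ⊥
instance : DiscreteTopology A2 := ⟨rfl⟩

/-- The variable `X`. -/
noncomputable def Xv : A2 := MonoidAlgebra.of ℤ FW (FreeMonoid.of 0)

/-- The variable `Y`. -/
noncomputable def Yv : A2 := MonoidAlgebra.of ℤ FW (FreeMonoid.of 1)

/-- The set `{ V^n(⟨a⟩) : n ∈ ℕ₀, a ∈ A }`. -/
def VTeich : Set (ℕ → A2) := {x | ∃ (n : ℕ) (a : A2), x = (Vb 2)^[n] (tm 2 a)}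

/-!
Let `τ a` be the sum, mod 2, of the coefficients of `a ∈ ℤ⟨X,Y⟩` at the cyclic rotations of the
word `XXYY`. Summing coefficients over a rotation-invariant set of words gives a trace, and in
characteristic 2 a trace is additive on squares; as no rotation of `XXYY` is a square word, `τ`
kills commutators and squares. Hence `f ↦ τ (f 1)` kills `[X(A),X(A)]`, `⟨a⟩` (entry `a²`),
`V⟨a⟩` (entry `2a`) and `Vⁿ⟨a⟩` for `n ≥ 2` (entry `0`). Its kernel is closed as `A` is discrete,
yet it takes the value `1` at `⟨X⟩⟨Y⟩`, whose entry of index 1 is `XXYY`.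
-/

namespace MonoidAlgebra

open scoped Classical

noncomputable def coeffSumOn {k M : Type*} [Semiring k] (S : Set M) : MonoidAlgebra k M →+ k :=
  (Finsupp.liftAddHom fun w => if w ∈ S then AddMonoidHom.id k else 0).comp
    MonoidAlgebra.coeffAddEquiv.toAddMonoidHom

theorem coeffSumOn_single {k M : Type*} [Semiring k] (S : Set M) (w : M) (c : k) :
    coeffSumOn S (single w c) = if w ∈ S then c else 0 := by
  change Finsupp.liftAddHom _ (Finsupp.single w c) = _
  rw [Finsupp.liftAddHom_apply_single]
  split <;> simp_all

section CommSemiring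

variable {k M : Type*} [CommSemiring k] [Monoid M] {S : Set M}

theorem coeffSumOn_single_mul_comm (hS : ∀ u v, u * v ∈ S ↔ v * u ∈ S) (u : M) (c : k)
    (y : MonoidAlgebra k M) : coeffSumOn S (single u c * y) = coeffSumOn S (y * single u c) := by
  induction y using MonoidAlgebra.induction with
  | zero => simp
  | single_add v d y _ _ ihy =>
    rw [mul_add, add_mul, map_add, map_add, ihy, single_mul_single, single_mul_single,
      coeffSumOn_single, coeffSumOn_single, mul_comm c d, if_congr (hS u v) rfl rfl]

theorem coeffSumOn_mul_comm (hS : ∀ u v, u * v ∈ S ↔ v * u ∈ S) (x y : MonoidAlgebra k M) :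
    coeffSumOn S (x * y) = coeffSumOn S (y * x) := by
  induction x using MonoidAlgebra.induction with
  | zero => simp
  | single_add u c x _ _ ihx =>
    rw [add_mul, mul_add, map_add, map_add, ihx, coeffSumOn_single_mul_comm hS]

end CommSemiring

end MonoidAlgebra

theorem AddMonoidHom.map_add_mul_self_of_mul_comm {A R : Type*} [NonUnitalNonAssocSemiring A]
    [Ring R] [CharP R 2] (τ : A →+ R) (hτ : ∀ x y, τ (x * y) = τ (y * x)) (a b : A) :
    τ ((a + b) * (a + b)) = τ (a * a) + τ (b * b) := by
  have hexp : (a + b) * (a + b) = a * a + b * b + (a * b + b * a) := by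
    rw [add_mul, mul_add, mul_add]; abel
  rw [hexp, map_add, map_add, map_add, hτ b a, CharTwo.add_self_eq_zero, add_zero]

theorem MonoidAlgebra.map_mul_self_eq_zero {k M R : Type*} [Semiring k] [Monoid M] [Ring R]
    [CharP R 2] (τ : MonoidAlgebra k M →+ R) (hτ : ∀ x y, τ (x * y) = τ (y * x))
    (hsq : ∀ w c, τ (single (w * w) (c * c)) = 0) (a : MonoidAlgebra k M) : τ (a * a) = 0 := by
  induction a using MonoidAlgebra.induction with
  | zero => simp
  | single_add w c a _ _ ih =>
    rw [τ.map_add_mul_self_of_mul_comm hτ, single_mul_single, hsq, ih, add_zero]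

theorem Vb_iterate_apply_of_lt {A : Type*} [Ring A] (p : ℕ) (g : ℕ → A) {m n : ℕ}
    (h : n < m) : (Vb p)^[m] g n = 0 := by
  induction m generalizing n with
  | zero => omega
  | succ m ih =>
    rw [Function.iterate_succ_apply']
    cases n with
    | zero => rfl
    | succ n => exact mul_eq_zero_of_right _ (ih (by omega))

def rotXXYY : Set FW := {w | w.toList ~r [0, 0, 1, 1]}

theorem mul_mem_rotXXYY_comm (u v : FW) : u * v ∈ rotXXYY ↔ v * u ∈ rotXXYY := by
  change (u.toList ++ v.toList) ~r _ ↔ (v.toList ++ u.toList) ~r _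
  exact ⟨List.isRotated_append.trans, List.isRotated_append.trans⟩

theorem mul_self_notMem_rotXXYY (w : FW) : w * w ∉ rotXXYY := by
  intro h
  change (w.toList ++ w.toList) ~r _ at h
  have hlen : (w.toList ++ w.toList).length = 4 := h.perm.length_eq
  rw [List.length_append] at hlen
  obtain ⟨a, b, hab⟩ := List.length_eq_two.mp (show w.toList.length = 2 by omega)
  rw [hab] at h
  fin_cases a <;> fin_cases b <;> revert h <;> decide

noncomputable def xxyyTrace : A2 →+ ZMod 2 :=
  (Int.castAddHom (ZMod 2)).comp (MonoidAlgebra.coeffSumOn rotXXYY)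

theorem xxyyTrace_mul_comm (x y : A2) : xxyyTrace (x * y) = xxyyTrace (y * x) :=
  congrArg (Int.castAddHom (ZMod 2)) (MonoidAlgebra.coeffSumOn_mul_comm mul_mem_rotXXYY_comm x y)

theorem xxyyTrace_mul_self (a : A2) : xxyyTrace (a * a) = 0 :=
  MonoidAlgebra.map_mul_self_eq_zero xxyyTrace xxyyTrace_mul_comm
    (fun w c => by simp [xxyyTrace, MonoidAlgebra.coeffSumOn_single, mul_self_notMem_rotXXYY])
    a

theorem xxyyTrace_XXYY : xxyyTrace (Xv * Xv * (Yv * Yv)) = 1 := by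
  simp only [xxyyTrace, Xv, Yv, MonoidAlgebra.of_apply, MonoidAlgebra.single_mul_single,
    AddMonoidHom.comp_apply, MonoidAlgebra.coeffSumOn_single]
  rw [if_pos (show _ * _ ∈ rotXXYY from List.IsRotated.refl _)]
  rfl

noncomputable def xxyyTrace₁ : (ℕ → A2) →+ ZMod 2 :=
  xxyyTrace.comp (Pi.evalAddMonoidHom (fun _ => A2) 1)

theorem xxyyTrace₁_apply (f : ℕ → A2) : xxyyTrace₁ f = xxyyTrace (f 1) := rfl

theorem isClosed_ker_xxyyTrace₁ : IsClosed (xxyyTrace₁.ker : Set (ℕ → A2)) :=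
  show IsClosed ((fun f : ℕ → A2 => f 1) ⁻¹' (xxyyTrace ⁻¹' {0})) from
    (isClosed_discrete _).preimage (continuous_apply 1)

theorem xxyyTrace₁_VTeich {f : ℕ → A2} (hf : f ∈ VTeich) : xxyyTrace₁ f = 0 := by
  obtain ⟨n, a, rfl⟩ := hf
  rw [xxyyTrace₁_apply]
  rcases n with _ | _ | n
  · rw [Function.iterate_zero_apply, tm, pow_one, sq, xxyyTrace_mul_self]
  · have h : Vb 2 (tm 2 a) 1 = a + a := by simp [Vb, tm, two_mul]
    rw [Function.iterate_one, h, map_add, CharTwo.add_self_eq_zero]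
  · rw [Vb_iterate_apply_of_lt 2 _ (by omega), map_zero]

theorem xxyyTrace₁_commXA {f : ℕ → A2} (hf : f ∈ commXA 2 A2) : xxyyTrace₁ f = 0 := by
  obtain ⟨x, -, y, -, rfl⟩ := hf
  change xxyyTrace (x 1 * y 1 - y 1 * x 1) = 0
  rw [map_sub, xxyyTrace_mul_comm, sub_self]

theorem xxyyTrace₁_tm_mul_tm : xxyyTrace₁ (tm 2 Xv * tm 2 Yv) = 1 := by
  change xxyyTrace (Xv ^ 2 ^ 1 * Yv ^ 2 ^ 1) = 1
  rw [pow_one, sq, sq, xxyyTrace_XXYY]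

/-- for `A = ℤ⟨X,Y⟩` and `p = 2`, the element `⟨X⟩·⟨Y⟩ ∈ X(A)` does not lie
in the topological closure of the additive subgroup of `A^{ℕ₀}` generated by the elements
`V^n(⟨a⟩)` together with `[X(A),X(A)]`; in particular `HH₀(X(A))` is not topologically
generated by the `V^n(⟨a⟩)`. -/
theorem stmt8 :
    tm 2 Xv * tm 2 Yv ∉
      closure ((AddSubgroup.closure (VTeich ∪ commXA 2 A2) : AddSubgroup (ℕ → A2)) :
        Set (ℕ → A2)) := by
  have hsub : closure ((AddSubgroup.closure (VTeich ∪ commXA 2 A2) : AddSubgroup (ℕ → A2)) :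
      Set (ℕ → A2)) ⊆ xxyyTrace₁.ker :=
    closure_minimal (AddSubgroup.closure_le _ |>.mpr fun f hf =>
      hf.elim xxyyTrace₁_VTeich xxyyTrace₁_commXA) isClosed_ker_xxyyTrace₁
  intro hmem
  have h := hsub hmem
  rw [SetLike.mem_coe, AddMonoidHom.mem_ker, xxyyTrace₁_tm_mul_tm] at h
  exact one_ne_zero h
end

section
/- Let A = ℤ⟨X,Y⟩. Then (XY − YX)² + 2(−XYXY + XXYY) does not lie in the additive subgroup A₄⁰ + F⁵A + 2A. (Indeed this element is congruent to −XYXY + YXYX modulo A₄⁰ + F⁵A + 2A.) -/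
/-- The word `XYXY`. -/
def wXYXY : FW := FreeMonoid.of 0 * FreeMonoid.of 1 * FreeMonoid.of 0 * FreeMonoid.of 1

/-- The word `YXYX`. -/
def wYXYX : FW := FreeMonoid.of 1 * FreeMonoid.of 0 * FreeMonoid.of 1 * FreeMonoid.of 0

/-- Generators of `A₄⁰`: all words of length `4` except `XYXY` and `YXYX`. -/
def A40set : Set A2 :=
  {x | ∃ w : FW, w.length = 4 ∧ w ≠ wXYXY ∧ w ≠ wYXYX ∧ x = MonoidAlgebra.of ℤ FW w}

/-- The words of length `≥ n`; they generate `FⁿA = ⊕_{i≥n} A_i` as an additive group. -/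
def FdegSet (n : ℕ) : Set A2 :=
  {x | ∃ w : FW, n ≤ w.length ∧ x = MonoidAlgebra.of ℤ FW w}

/-- The set `2A`. -/
def twoA : Set A2 := {x | ∃ a : A2, x = 2 * a}

/-- `H := A₄⁰ + F⁵A + 2A`, as the additive subgroup generated by the union. -/
noncomputable def Hsub : AddSubgroup A2 := AddSubgroup.closure (A40set ∪ FdegSet 5 ∪ twoA)

/-! The coefficient of `XYXY` reduced mod `2` is an additive map that kills every generator of
`A₄⁰ + F⁵A + 2A` but takes the value `1` on `-XYXY + YXYX`. Expanding
`(XY - YX)² = XYXY - XYYX - YXXY + YXYX` shows that the given element differs from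
`-XYXY + YXYX` by `2·XXYY - XYYX - YXXY ∈ A₄⁰ + 2A`. -/

instance : DecidableEq FW := inferInstanceAs (DecidableEq (List (Fin 2)))

noncomputable def coeffMod2 {M : Type*} (w : M) : MonoidAlgebra ℤ M →+ ZMod 2 :=
  (Int.castAddHom (ZMod 2)).comp
    ((Finsupp.applyAddHom w).comp MonoidAlgebra.coeffAddEquiv.toAddMonoidHom)

lemma coeffMod2_of_self {M : Type*} [Monoid M] (w : M) :
    coeffMod2 w (MonoidAlgebra.of ℤ M w) = 1 := by
  simp [coeffMod2, MonoidAlgebra.coeffAddEquiv]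

lemma coeffMod2_of_of_ne {M : Type*} [Monoid M] {w v : M} (h : v ≠ w) :
    coeffMod2 w (MonoidAlgebra.of ℤ M v) = 0 := by
  simp [coeffMod2, MonoidAlgebra.coeffAddEquiv, h]

lemma coeffMod2_two_mul {M : Type*} [Monoid M] (w : M) (a : MonoidAlgebra ℤ M) :
    coeffMod2 w (2 * a) = 0 := by
  rw [two_mul, map_add, CharTwo.add_self_eq_zero]

lemma Hsub_le_ker_coeffMod2 : Hsub ≤ (coeffMod2 wXYXY).ker := by
  rw [Hsub, AddSubgroup.closure_le]
  rintro x ((⟨w, -, hXYXY, -, rfl⟩ | ⟨w, hlen, rfl⟩) | ⟨a, rfl⟩)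
  · exact coeffMod2_of_of_ne hXYXY
  · exact coeffMod2_of_of_ne (by rintro rfl; simp [wXYXY] at hlen)
  · exact coeffMod2_two_mul _ a

lemma of_mem_Hsub {w : FW} (hw : w.length = 4) (hXYXY : w ≠ wXYXY) (hYXYX : w ≠ wYXYX) :
    MonoidAlgebra.of ℤ FW w ∈ Hsub :=
  AddSubgroup.subset_closure (Or.inl (Or.inl ⟨w, hw, hXYXY, hYXYX, rfl⟩))

lemma two_mul_mem_Hsub (a : A2) : 2 * a ∈ Hsub :=
  AddSubgroup.subset_closure (Or.inr ⟨a, rfl⟩)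

lemma XYYX_mem_Hsub : Xv * Yv * Yv * Xv ∈ Hsub := by
  simp only [Xv, Yv, ← map_mul]
  exact of_mem_Hsub (by simp) (by decide) (by decide)

lemma YXXY_mem_Hsub : Yv * Xv * Xv * Yv ∈ Hsub := by
  simp only [Xv, Yv, ← map_mul]
  exact of_mem_Hsub (by simp) (by decide) (by decide)

lemma neg_XYXY_add_YXYX_notMem_Hsub : -(Xv * Yv * Xv * Yv) + Yv * Xv * Yv * Xv ∉ Hsub := by
  intro h
  have hXYXY : Xv * Yv * Xv * Yv = MonoidAlgebra.of ℤ FW wXYXY := by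
    simp only [Xv, Yv, wXYXY, map_mul]
  have hYXYX : Yv * Xv * Yv * Xv = MonoidAlgebra.of ℤ FW wYXYX := by
    simp only [Xv, Yv, wYXYX, map_mul]
  have hne : wYXYX ≠ wXYXY := by decide
  have := Hsub_le_ker_coeffMod2 h
  rw [AddMonoidHom.mem_ker, map_add, map_neg, hXYXY, hYXYX, coeffMod2_of_self,
    coeffMod2_of_of_ne hne] at this
  exact absurd this (by decide)

/-- `(XY − YX)² + 2(−XYXY + XXYY)` does not lie in `A₄⁰ + F⁵A + 2A`; indeed
this element is congruent to `−XYXY + YXYX` modulo `A₄⁰ + F⁵A + 2A`. -/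
theorem stmt17 :
    ((Xv * Yv - Yv * Xv) ^ 2 + 2 * (-(Xv * Yv * Xv * Yv) + Xv * Xv * Yv * Yv) ∉ Hsub) ∧
    ((Xv * Yv - Yv * Xv) ^ 2 + 2 * (-(Xv * Yv * Xv * Yv) + Xv * Xv * Yv * Yv)
      - (-(Xv * Yv * Xv * Yv) + Yv * Xv * Yv * Xv) ∈ Hsub) := by
  have hcongr : (Xv * Yv - Yv * Xv) ^ 2 + 2 * (-(Xv * Yv * Xv * Yv) + Xv * Xv * Yv * Yv)
      - (-(Xv * Yv * Xv * Yv) + Yv * Xv * Yv * Xv) ∈ Hsub := by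
    have h : (Xv * Yv - Yv * Xv) ^ 2 + 2 * (-(Xv * Yv * Xv * Yv) + Xv * Xv * Yv * Yv)
        - (-(Xv * Yv * Xv * Yv) + Yv * Xv * Yv * Xv)
        = 2 * (Xv * Xv * Yv * Yv) - Xv * Yv * Yv * Xv - Yv * Xv * Xv * Yv := by
      noncomm_ring
    rw [h]
    exact sub_mem (sub_mem (two_mul_mem_Hsub _) XYYX_mem_Hsub) YXXY_mem_Hsub
  refine ⟨fun h => neg_XYXY_add_YXYX_notMem_Hsub ?_, hcongr⟩
  simpa using sub_mem h hcongr
end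

section
/- Let A = ℤ⟨X,Y⟩ and p = 2. There exists an element x = (x₀,x₁,x₂,...) ∈ X(A) such that x_n ∈ [A,A] for every n ≥ 0, but x does not lie in the topological closure of [X(A),X(A)]. Consequently, the natural map HH₀(X(A)) := X(A)/closure([X(A),X(A)]) → (A/[A,A])^{ℕ₀}, induced by the inclusion X(A) ⊆ A^{ℕ₀} followed by the componentwise quotient A → A/[A,A], is not injective. -/
/-- The set of commutators of `A`, generating `[A,A]`. -/
def commA : Set A2 := {x | ∃ a b : A2, x = a * b - b * a}

/-!
Take x = ⟨XY⟩ − ⟨YX⟩; its n-th component (XY)^(2^n) − (YX)^(2^n) is the commutator of X and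
(YX)^(2^n − 1)·Y. Index 1 of every element of X(A) lies in the subring of A of elements whose
coefficients at the letters X and Y are even: on generators it is a product of squares a², whose
letter coefficients are 2·a(1)·a(X), or a multiple of 2. For s, t in that subring the coefficient
of XYXY in st − ts is even, since modulo 2 only terms containing a letter coefficient of s or t
survive.
Both conditions only see index 1, so they are closed in the product topology and pass to the
closures. But the XYXY-coefficient of x₁ = (XY)² − (YX)² is 1.
-/

open FreeMonoid
open Finset (range sum_range_succ)
open MonoidAlgebra (single)

section FreeMonoidAlgebra

variable {R α : Type*}

theorem MonoidAlgebra.coeff_mul_ofList [Semiring R] (f g : MonoidAlgebra R (FreeMonoid α))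
    (l : List α) :
    (f * g).coeff (ofList l) =
      ∑ i ∈ range (l.length + 1), f.coeff (ofList (l.take i)) * g.coeff (ofList (l.drop i)) := by
  classical
  rw [MonoidAlgebra.coeff_mul_antidiag f g _
    ((range (l.length + 1)).image fun i => (ofList (l.take i), ofList (l.drop i)))]
  · refine Finset.sum_image fun i hi j hj hij => ?_
    have hlen := congrArg (fun q => (toList q.1).length) hij
    simp only [Finset.mem_coe, Finset.mem_range] at hi hj
    simp only [toList_ofList, List.length_take] at hlen
    omega
  · rintro ⟨u, v⟩
    simp only [Finset.mem_image, Finset.mem_range, Prod.mk.injEq]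
    constructor
    · rintro ⟨i, -, rfl, rfl⟩
      rw [← ofList_append, List.take_append_drop]
    · intro h
      obtain rfl : toList u ++ toList v = l := congrArg toList h
      exact ⟨(toList u).length, by simp, by simp, by simp⟩

theorem MonoidAlgebra.coeff_mul_of [Semiring R] (f g : MonoidAlgebra R (FreeMonoid α)) (a : α) :
    (f * g).coeff (FreeMonoid.of a) =
      f.coeff 1 * g.coeff (FreeMonoid.of a) + f.coeff (FreeMonoid.of a) * g.coeff 1 := by
  simpa [sum_range_succ] using coeff_mul_ofList f g [a]

theorem coeff_sq_sub_sq_of_ne [Ring R] {a b : α} (hab : a ≠ b) :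
    ((single (of a) (1 : R) * single (of b) 1) ^ 2 - (single (of b) 1 * single (of a) 1) ^ 2).coeff
      (ofList [a, b, a, b]) = 1 := by
  have hne : ofList [a, b, a, b] ≠ ofList [b, a, b, a] :=
    ofList.injective.ne (by simp [hab])
  simp only [MonoidAlgebra.coeff_sub, MonoidAlgebra.single_mul_single, MonoidAlgebra.single_pow,
    MonoidAlgebra.coeff_single, Finsupp.sub_apply]
  rw [show (of a * of b) ^ 2 = ofList [a, b, a, b] from rfl,
    show (of b * of a) ^ 2 = ofList [b, a, b, a] from rfl, Finsupp.single_eq_same,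
    Finsupp.single_eq_of_ne hne]
  simp

variable (R) in
noncomputable def evenCoeffAt [Ring R] {M : Type*} (m : M) : AddSubgroup (MonoidAlgebra R M) :=
  (AddSubgroup.even R).comap
    ((Finsupp.applyAddHom m).comp MonoidAlgebra.coeffAddEquiv.toAddMonoidHom)

theorem mem_evenCoeffAt [Ring R] {M : Type*} {m : M} {x : MonoidAlgebra R M} :
    x ∈ evenCoeffAt R m ↔ Even (x.coeff m) :=
  Iff.rfl

variable (R α) in
def evenLetterCoeffs [CommRing R] : Subring (MonoidAlgebra R (FreeMonoid α)) where
  carrier := {s | ∀ a, Even (s.coeff (of a))}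
  mul_mem' {s t} hs ht a := by
    rw [MonoidAlgebra.coeff_mul_of]
    exact ((ht a).mul_left _).add ((hs a).mul_right _)
  one_mem' a := by simp [MonoidAlgebra.one_def]
  add_mem' hs ht a := by simpa [MonoidAlgebra.coeff_add] using (hs a).add (ht a)
  zero_mem' a := by simp
  neg_mem' hs a := by simpa [MonoidAlgebra.coeff_neg] using (hs a).neg

variable [CommRing R]

theorem sq_mem_evenLetterCoeffs (s : MonoidAlgebra R (FreeMonoid α)) :
    s ^ 2 ∈ evenLetterCoeffs R α := fun a =>
  ⟨s.coeff 1 * s.coeff (of a), by rw [sq, MonoidAlgebra.coeff_mul_of, mul_comm (s.coeff (of a))]⟩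

theorem two_mul_mem_evenLetterCoeffs (s : MonoidAlgebra R (FreeMonoid α)) :
    2 * s ∈ evenLetterCoeffs R α := fun a => by
  simp [two_mul, MonoidAlgebra.coeff_add]

theorem commutator_mem_evenCoeffAt {s t : MonoidAlgebra R (FreeMonoid α)}
    (hs : s ∈ evenLetterCoeffs R α) (ht : t ∈ evenLetterCoeffs R α) (a b : α) :
    s * t - t * s ∈ evenCoeffAt R (ofList [a, b, a, b]) := by
  rw [mem_evenCoeffAt, MonoidAlgebra.coeff_sub, Finsupp.sub_apply, MonoidAlgebra.coeff_mul_ofList,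
    MonoidAlgebra.coeff_mul_ofList]
  simp only [List.length_cons, List.length_nil, sum_range_succ, Finset.sum_range_zero,
    List.take_succ_cons, List.take_zero, List.drop_succ_cons, List.drop_zero, ofList_singleton]
  -- the splittings `1·abab`, `ab·ab`, `abab·1` cancel against those of `t * s`
  have h := (((hs a).mul_right (t.coeff (ofList [b, a, b]))).sub
      ((ht a).mul_right (s.coeff (ofList [b, a, b])))).add
    (((ht b).mul_left (s.coeff (ofList [a, b, a]))).sub
      ((hs b).mul_left (t.coeff (ofList [a, b, a]))))
  refine (congrArg Even ?_).mpr h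
  ring

end FreeMonoidAlgebra

section ComponentOne

variable {A : Type*} [TopologicalSpace A] [DiscreteTopology A]

theorem isClosed_comap_evalAddMonoidHom [AddGroup A] {ι : Type*} (i : ι) (T : AddSubgroup A) :
    IsClosed (T.comap (Pi.evalAddMonoidHom (fun _ => A) i) : Set (ι → A)) :=
  (isClosed_discrete (T : Set A)).preimage (continuous_apply i)

variable [Ring A] {p : ℕ}

theorem apply_one_mem_of_mem_XA (S : Subring A) (hpow : ∀ a, a ^ p ∈ S)
    (hV : ∀ a, (p : A) * a ∈ S) {u : ℕ → A} (hu : u ∈ XA p A) : u 1 ∈ S := by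
  refine AddSubgroup.topologicalClosure_minimal _ ?_
    (isClosed_comap_evalAddMonoidHom 1 S.toAddSubgroup) hu
  rw [AddSubgroup.closure_le]
  rintro _ ⟨m, l, -, rfl⟩
  cases m with
  | zero =>
    simp only [Function.iterate_zero, id, SetLike.mem_coe, AddSubgroup.mem_comap,
      Pi.evalAddMonoidHom_apply, Pi.list_prod_apply, List.map_map]
    exact Subring.list_prod_mem S (by simpa [tm] using fun a _ => hpow a)
  | succ m =>
    rw [Function.iterate_succ_apply']
    exact hV _

theorem apply_one_mem_of_mem_closure_commXA (S : Subring A) (hpow : ∀ a, a ^ p ∈ S)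
    (hV : ∀ a, (p : A) * a ∈ S) (T : AddSubgroup A) (hT : ∀ s ∈ S, ∀ t ∈ S, s * t - t * s ∈ T)
    {z : ℕ → A} (hz : z ∈ closure (AddSubgroup.closure (commXA p A) : Set (ℕ → A))) :
    z 1 ∈ T := by
  refine closure_minimal (SetLike.coe_subset_coe.mpr ?_) (isClosed_comap_evalAddMonoidHom 1 T) hz
  rw [AddSubgroup.closure_le]
  rintro _ ⟨x, hx, y, hy, rfl⟩
  exact hT _ (apply_one_mem_of_mem_XA S hpow hV hx) _ (apply_one_mem_of_mem_XA S hpow hV hy)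

end ComponentOne

theorem mul_pow_succ_sub_eq_commutator {M : Type*} [Ring M] (a b : M) (n : ℕ) :
    (a * b) ^ (n + 1) - (b * a) ^ (n + 1) = a * ((b * a) ^ n * b) - (b * a) ^ n * b * a := by
  rw [pow_succ, pow_succ, ← mul_assoc, mul_pow_mul, ← mul_assoc _ b a, mul_assoc a]

/-- for `A = ℤ⟨X,Y⟩` and `p = 2`, there is an element
`x = (x₀,x₁,...) ∈ X(A)` all of whose components lie in `[A,A]`, but which does not lie in
the topological closure of `[X(A),X(A)]`.  (Consequently the natural "ghost" map
`HH₀(X(A)) = X(A)/closure([X(A),X(A)]) → (A/[A,A])^{ℕ₀}` is not injective.) -/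
theorem stmt18 :
    ∃ x : ℕ → A2, x ∈ XA 2 A2 ∧ (∀ n, x n ∈ AddSubgroup.closure commA) ∧
      x ∉ closure ((AddSubgroup.closure (commXA 2 A2) : AddSubgroup (ℕ → A2)) :
        Set (ℕ → A2)) := by
  set X : A2 := single (of 0) 1
  set Y : A2 := single (of 1) 1
  refine ⟨tm 2 (X * Y) - tm 2 (Y * X), ?_, fun n => ?_, fun hx => ?_⟩
  · refine AddSubgroup.le_topologicalClosure _ (sub_mem ?_ ?_)
    · exact AddSubgroup.subset_closure ⟨0, [X * Y], by simp, by simp⟩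
    · exact AddSubgroup.subset_closure ⟨0, [Y * X], by simp, by simp⟩
  · obtain ⟨k, hk⟩ := Nat.exists_eq_add_one_of_ne_zero (pow_ne_zero n two_ne_zero)
    refine AddSubgroup.subset_closure ⟨X, (Y * X) ^ k * Y, ?_⟩
    simp only [Pi.sub_apply, tm, hk, mul_pow_succ_sub_eq_commutator]
  · have heven := apply_one_mem_of_mem_closure_commXA (evenLetterCoeffs ℤ (Fin 2))
      sq_mem_evenLetterCoeffs (fun a => by simpa using two_mul_mem_evenLetterCoeffs a) _
      (fun s hs t ht => commutator_mem_evenCoeffAt hs ht 0 1) hx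
    rw [mem_evenCoeffAt, Pi.sub_apply, tm, tm, pow_one, coeff_sq_sub_sq_of_ne (by decide)] at heven
    exact Int.not_even_one heven
end
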